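/- arXiv:1207.1836 — 4 statements merged into one kernel-verified Lean document; each statement's English description precedes it below -/
import Mathlib

section
/- Let α > 2, β > 0 and N > 0 be real numbers, let R_T = (Nβ)^{-1/α} and R_B = R_T/6. Let S be a finite set of points in the Euclidean plane ℝ² (the simultaneously transmitting nodes) and let x ∈ S. If the LowPower event occurs at x, i.e. ∑_{z ∈ S \ {x}} d(z,x)^{-α} ≤ (4(β+4)R_B)^{-α}, then every point y ∈ ℝ² \ S with 0 < d(x,y) ≤ 2R_B successfully receives the transmission from x, i.e. d(x,y)^{-α} / (N + ∑_{z ∈ S \ {x}} d(z,y)^{-α}) ≥ β. -/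
open Real
open scoped Classical

/-!
If the interference at the transmitter `x` is at most `(4(β+4)R_B)^{-α}`, every other transmitter
lies at distance at least `4(β+4)R_B ≥ 2 d(x, y)` from `x`, hence at distance at least half as much
from `y`; so the interference at `y` is at most `(2(β+4)R_B)^{-α}`. Since `Nβ = (6R_B)^{-α}`, after
dividing by `(2R_B)^{-α} ≤ d(x, y)^{-α}` the SINR condition reduces to
`3^{-α} + β(β+4)^{-α} ≤ 1/9 + β/(β+4)² ≤ 1/9 + 1/16 ≤ 1`.
-/

lemma rpow_neg_le_inv_sq {a α : ℝ} (ha : 1 ≤ a) (hα : 2 ≤ α) : a ^ (-α) ≤ (a ^ 2)⁻¹ := by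
  calc a ^ (-α) ≤ a ^ (-2 : ℝ) := rpow_le_rpow_of_exponent_le ha (by linarith)
    _ = (a ^ 2)⁻¹ := by rw [rpow_neg (by linarith), rpow_two]

lemma three_rpow_neg_add_mul_add_four_rpow_neg_le_one {α β : ℝ} (hα : 2 ≤ α) (hβ : 0 ≤ β) :
    3 ^ (-α) + β * (β + 4) ^ (-α) ≤ 1 := by
  have h3 : (3 : ℝ) ^ (-α) ≤ 1 / 9 := by
    exact (rpow_neg_le_inv_sq (by norm_num) hα).trans_eq (by norm_num)
  have hβ4 : β * (β + 4) ^ (-α) ≤ 1 / 16 := by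
    have hsq : (0 : ℝ) < (β + 4) ^ 2 := by positivity
    calc β * (β + 4) ^ (-α) ≤ β * ((β + 4) ^ 2)⁻¹ :=
          mul_le_mul_of_nonneg_left (rpow_neg_le_inv_sq (by linarith) hα) hβ
      _ ≤ 1 / 16 := by
          rw [mul_inv_le_iff₀ hsq]
          nlinarith [sq_nonneg (β - 4)]
  linarith

section MetricSpace

variable {X : Type*} [PseudoMetricSpace X]

lemma dist_rpow_neg_le_two_rpow_mul {α : ℝ} (hα : 0 ≤ α) {x y z : X}
    (hzx : 0 < dist z x) (hfar : 2 * dist x y ≤ dist z x) :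
    dist z y ^ (-α) ≤ 2 ^ α * dist z x ^ (-α) := by
  have hhalf : dist z x / 2 ≤ dist z y := by
    linarith [dist_triangle z y x, dist_comm x y]
  calc dist z y ^ (-α) ≤ (dist z x / 2) ^ (-α) :=
        rpow_le_rpow_of_nonpos (by positivity) hhalf (by linarith)
    _ = 2 ^ α * dist z x ^ (-α) := by
        rw [div_rpow dist_nonneg zero_le_two, rpow_neg zero_le_two, div_eq_mul_inv, inv_inv,
          mul_comm]

lemma sum_dist_rpow_neg_le_of_sum_le {α ρ : ℝ} (hα : 0 < α) (hρ : 0 < ρ) {s : Finset X}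
    {x y : X} (hxs : ∀ z ∈ s, 0 < dist z x) (hxy : dist x y ≤ ρ)
    (hlow : ∑ z ∈ s, dist z x ^ (-α) ≤ (2 * ρ) ^ (-α)) :
    ∑ z ∈ s, dist z y ^ (-α) ≤ ρ ^ (-α) := by
  have hfar : ∀ z ∈ s, 2 * dist x y ≤ dist z x := fun z hz => by
    have hterm : dist z x ^ (-α) ≤ (2 * ρ) ^ (-α) :=
      (Finset.single_le_sum (f := fun z => dist z x ^ (-α)) (fun _ _ => rpow_nonneg dist_nonneg _) hz).trans hlow
    have := (rpow_le_rpow_iff_of_neg (hxs z hz) (by positivity) (by linarith)).mp hterm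
    linarith
  calc ∑ z ∈ s, dist z y ^ (-α) ≤ ∑ z ∈ s, 2 ^ α * dist z x ^ (-α) :=
        Finset.sum_le_sum fun z hz => dist_rpow_neg_le_two_rpow_mul hα.le (hxs z hz) (hfar z hz)
    _ = 2 ^ α * ∑ z ∈ s, dist z x ^ (-α) := by rw [Finset.mul_sum]
    _ ≤ 2 ^ α * (2 * ρ) ^ (-α) := mul_le_mul_of_nonneg_left hlow (by positivity)
    _ = ρ ^ (-α) := by
        rw [mul_rpow zero_le_two hρ.le, ← mul_assoc, ← rpow_add two_pos]
        simp

end MetricSpace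

theorem stmt_0_general (α β N : ℝ) (hα : 2 < α) (hβ : 0 < β) (hN : 0 < N)
    (R_T R_B : ℝ) (hRT : R_T = (N * β) ^ (-1 / α)) (hRB : R_B = R_T / 6)
    (S : Finset (EuclideanSpace ℝ (Fin 2))) (x : EuclideanSpace ℝ (Fin 2))
    (hlow : ∑ z ∈ S.erase x, dist z x ^ (-α) ≤ (4 * (β + 4) * R_B) ^ (-α))
    (y : EuclideanSpace ℝ (Fin 2))
    (hd0 : 0 < dist x y) (hd : dist x y ≤ 2 * R_B) :
    dist x y ^ (-α) / (N + ∑ z ∈ S.erase x, dist z y ^ (-α)) ≥ β := by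
  have hRB0 : 0 < R_B := by rw [hRB, hRT]; positivity
  have hNβ : β * N = 3 ^ (-α) * (2 * R_B) ^ (-α) := by
    rw [← mul_rpow (by norm_num) (by positivity), show 3 * (2 * R_B) = R_T by rw [hRB]; ring, hRT,
      show -1 / α = (-α)⁻¹ by field_simp, rpow_inv_rpow (by positivity) (by linarith), mul_comm]
  have hI : ∑ z ∈ S.erase x, dist z y ^ (-α) ≤ (β + 4) ^ (-α) * (2 * R_B) ^ (-α) := by
    rw [← mul_rpow (by positivity) (by positivity)]
    refine sum_dist_rpow_neg_le_of_sum_le (by linarith) (by positivity)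
      (fun z hz => dist_pos.mpr (Finset.ne_of_mem_erase hz)) (by nlinarith) ?_
    convert hlow using 2
    ring
  have hI0 : 0 ≤ ∑ z ∈ S.erase x, dist z y ^ (-α) :=
    Finset.sum_nonneg fun _ _ => rpow_nonneg dist_nonneg _
  have hkey := three_rpow_neg_add_mul_add_four_rpow_neg_le_one hα.le hβ.le
  rw [ge_iff_le, le_div_iff₀ (by linarith)]
  calc β * (N + ∑ z ∈ S.erase x, dist z y ^ (-α))
      ≤ (3 ^ (-α) + β * (β + 4) ^ (-α)) * (2 * R_B) ^ (-α) := by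
        nlinarith [mul_le_mul_of_nonneg_left hI hβ.le]
    _ ≤ (2 * R_B) ^ (-α) := mul_le_of_le_one_left (by positivity) hkey
    _ ≤ dist x y ^ (-α) := rpow_le_rpow_of_nonpos hd0 hd (by linarith)

/-- If the LowPower event occurs at a transmitter `x`, then every
non-transmitting point `y` within distance `2 * R_B` of `x` receives the
transmission from `x`, i.e. the SINR condition holds at `y`. -/
theorem stmt_0 (α β N : ℝ) (hα : 2 < α) (hβ : 0 < β) (hN : 0 < N)
    (R_T R_B : ℝ) (hRT : R_T = (N * β) ^ (-1 / α)) (hRB : R_B = R_T / 6)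
    (S : Finset (EuclideanSpace ℝ (Fin 2))) (x : EuclideanSpace ℝ (Fin 2)) (hx : x ∈ S)
    (hlow : ∑ z ∈ S.erase x, dist z x ^ (-α) ≤ (4 * (β + 4) * R_B) ^ (-α))
    (y : EuclideanSpace ℝ (Fin 2)) (hy : y ∉ S)
    (hd0 : 0 < dist x y) (hd : dist x y ≤ 2 * R_B) :
    dist x y ^ (-α) / (N + ∑ z ∈ S.erase x, dist z y ^ (-α)) ≥ β :=
  stmt_0_general α β N hα hβ hN R_T R_B hRT hRB S x hlow y hd0 hd
end

section
/- There exists a universal constant C > 0 such that the following holds. Let α > 2, 0 < φ ≤ 1, R_B > 0 and R_T = R_B/φ. Let V ⊆ ℝ² be a finite set of points with weights p_v ∈ [0,1] such that for every point c ∈ ℝ², ∑_{v ∈ V, d(v,c) ≤ R_B} p_v ≤ 1/2. Then for every x ∈ ℝ², ∑_{v ∈ V, d(v,x) > R_T} p_v · d(v,x)^{-α} ≤ C · ((α-1)/(α-2)) · φ^{α-2} / R_B^{α}. -/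
/-!
Tile the plane by the squares of side `R_B` of the lattice with a corner at `x`. Each square lies in
the ball of radius `R_B` around its centre, so it carries weight at most `1/2`. The squares of ring
index `m` (the boundary layer of the `(2m + 2) × (2m + 2)` block of squares around `x`) number
`8m + 4`, and their points lie at distance at least `m R_B` from `x`; the points that count are
also farther than `R_B / φ`. So the interference is at most `R_B^(-α)` times
`∑ₘ (4m + 2) max(m, 1/φ)^(-α)`: the `O(1/φ)` rings with `m ≤ ⌈1/φ⌉` hold `O(φ⁻²)` squares, each
contributing at most `φ^α`, and the remaining rings are compared with
`∫_{1/φ}^∞ t^(1-α) dt = φ^(α-2) / (α - 2)`.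
-/

open Real Finset

local notation "ℝ²" => EuclideanSpace ℝ (Fin 2)

theorem sum_mul_comp_le_sum_image {ι κ M : Type*} [DecidableEq κ] [CommSemiring M] [PartialOrder M]
    [IsOrderedRing M] {s : Finset ι} {f : ι → κ} {w : ι → M} {g B : κ → M}
    (hg : ∀ z ∈ s.image f, 0 ≤ g z) (hB : ∀ z ∈ s.image f, ∑ i ∈ s with f i = z, w i ≤ B z) :
    ∑ i ∈ s, w i * g (f i) ≤ ∑ z ∈ s.image f, B z * g z := by
  rw [← sum_fiberwise_of_maps_to fun i hi => mem_image_of_mem f hi]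
  refine sum_le_sum fun z hz => ?_
  calc ∑ i ∈ s with f i = z, w i * g (f i) = (∑ i ∈ s with f i = z, w i) * g z := by
        rw [sum_mul]
        exact sum_congr rfl fun i hi => by rw [(mem_filter.1 hi).2]
    _ ≤ B z * g z := mul_le_mul_of_nonneg_right (hB z hz) (hg z hz)

theorem sum_natCast_rpow_neg_le {s : ℝ} (hs : 1 < s) {K : ℕ} (hK : 0 < K) {t : Finset ℕ}
    (ht : ∀ m ∈ t, K < m) : ∑ m ∈ t, (m : ℝ) ^ (-s) ≤ (K : ℝ) ^ (1 - s) / (s - 1) := by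
  set N := max K (t.sup id)
  have hKN : K ≤ N := le_max_left _ _
  have hK₀ : (0 : ℝ) < K := by exact_mod_cast hK
  have hsub : t ⊆ Ico (K + 1) (N + 1) := fun m hm => by
    have hmN : m ≤ t.sup id := le_sup (f := id) hm
    have hKm := ht m hm
    simp only [mem_Ico]; omega
  have hanti : AntitoneOn (fun x : ℝ => x ^ (-s)) (Set.Icc (K : ℝ) N) :=
    (antitoneOn_rpow_Ioi_of_exponent_nonpos (by linarith)).mono
      fun x hx => hK₀.trans_le hx.1
  have hzero : (0 : ℝ) ∉ Set.uIcc (K : ℝ) N := by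
    rw [Set.uIcc_of_le (by exact_mod_cast hKN)]
    exact fun h => hK₀.not_ge h.1
  calc ∑ m ∈ t, (m : ℝ) ^ (-s) ≤ ∑ m ∈ Ico (K + 1) (N + 1), (m : ℝ) ^ (-s) :=
        sum_le_sum_of_subset_of_nonneg hsub fun _ _ _ => by positivity
    _ = ∑ i ∈ Ico K N, ((i + 1 : ℕ) : ℝ) ^ (-s) := (sum_Ico_add' _ _ _ _).symm
    _ ≤ ∫ x in (K : ℝ)..N, x ^ (-s) := hanti.sum_le_integral_Ico hKN
    _ = ((N : ℝ) ^ (1 - s) - (K : ℝ) ^ (1 - s)) / (1 - s) := by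
        rw [integral_rpow (Or.inr ⟨by linarith, hzero⟩), neg_add_eq_sub]
    _ ≤ (K : ℝ) ^ (1 - s) / (s - 1) := by
        rw [← neg_div_neg_eq, neg_sub, neg_sub]
        gcongr
        exact sub_le_self _ (by positivity)

theorem sum_mul_max_rpow_neg_le {α a : ℝ} (hα : 2 < α) (ha : 1 ≤ a) (s : Finset ℕ) :
    ∑ m ∈ s, (2 * (m : ℝ) + 1) * max (m : ℝ) a ^ (-α) ≤
      15 * ((α - 1) / (α - 2)) * a ^ (2 - α) := by
  have ha₀ : 0 < a := by linarith
  set K := ⌈a⌉₊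
  have haK : a ≤ K := Nat.le_ceil a
  have hKa : (K : ℝ) < a + 1 := Nat.ceil_lt_add_one ha₀.le
  have hK : 0 < K := Nat.ceil_pos.2 ha₀
  have hpow : a ^ (2 - α) = a ^ 2 * a ^ (-α) := by
    rw [sub_eq_add_neg, rpow_add ha₀, rpow_two]
  have near : ∑ m ∈ s with m ≤ K, (2 * (m : ℝ) + 1) * max (m : ℝ) a ^ (-α) ≤
      15 * a ^ (2 - α) := by
    have hcard : #{m ∈ s | m ≤ K} ≤ K + 1 := by
      simpa using card_le_card fun m hm => mem_range_succ_iff.2 (mem_filter.1 hm).2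
    have hterm : ∀ m ∈ s.filter (· ≤ K), (2 * (m : ℝ) + 1) * max (m : ℝ) a ^ (-α) ≤
        (2 * K + 1) * a ^ (-α) := fun m hm => by
      have hmK : (m : ℝ) ≤ K := by exact_mod_cast (mem_filter.1 hm).2
      exact mul_le_mul (by linarith) (rpow_le_rpow_of_nonpos ha₀ (le_max_right _ _) (by linarith))
        (by positivity) (by positivity)
    calc _ ≤ #{m ∈ s | m ≤ K} • ((2 * K + 1) * a ^ (-α)) := sum_le_card_nsmul _ _ _ hterm
      _ ≤ ((K : ℝ) + 1) * ((2 * K + 1) * a ^ (-α)) := by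
          rw [nsmul_eq_mul]; gcongr; exact_mod_cast hcard
      _ ≤ (3 * a) * ((5 * a) * a ^ (-α)) := by gcongr <;> linarith
      _ = 15 * a ^ (2 - α) := by rw [hpow]; ring
  have far : ∑ m ∈ s with ¬m ≤ K, (2 * (m : ℝ) + 1) * max (m : ℝ) a ^ (-α) ≤
      3 * (a ^ (2 - α) / (α - 2)) := by
    have hterm : ∀ m ∈ s.filter (¬· ≤ K), (2 * (m : ℝ) + 1) * max (m : ℝ) a ^ (-α) ≤
        3 * (m : ℝ) ^ (-(α - 1)) := fun m hm => by
      have hKm : (K : ℝ) < m := by exact_mod_cast not_le.1 (mem_filter.1 hm).2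
      have hm₀ : (0 : ℝ) < m := by linarith
      rw [max_eq_left (by linarith), show -(α - 1) = 1 + -α by ring, rpow_add hm₀, rpow_one]
      nlinarith [rpow_pos_of_pos hm₀ (-α)]
    calc _ ≤ ∑ m ∈ s with ¬m ≤ K, 3 * (m : ℝ) ^ (-(α - 1)) := sum_le_sum hterm
      _ = 3 * ∑ m ∈ s with ¬m ≤ K, (m : ℝ) ^ (-(α - 1)) := (mul_sum _ _ _).symm
      _ ≤ 3 * ((K : ℝ) ^ (1 - (α - 1)) / (α - 1 - 1)) := by
          gcongr
          exact sum_natCast_rpow_neg_le (by linarith) hK fun m hm => not_le.1 (mem_filter.1 hm).2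
      _ ≤ 3 * (a ^ (2 - α) / (α - 2)) := by
          rw [show 1 - (α - 1) = 2 - α by ring, show α - 1 - 1 = α - 2 by ring]
          gcongr 3 * (?_ / _)
          exact rpow_le_rpow_of_nonpos ha₀ haK (by linarith)
  have hconst : 15 + 3 / (α - 2) ≤ 15 * ((α - 1) / (α - 2)) := by
    rw [← sub_nonneg]
    have : 15 * ((α - 1) / (α - 2)) - (15 + 3 / (α - 2)) = 12 / (α - 2) := by
      field_simp [show α - 2 ≠ 0 by linarith]; ring
    rw [this]; exact div_nonneg (by norm_num) (by linarith)
  rw [← sum_filter_add_sum_filter_not s (· ≤ K)]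
  calc _ ≤ 15 * a ^ (2 - α) + 3 * (a ^ (2 - α) / (α - 2)) := add_le_add near far
    _ = (15 + 3 / (α - 2)) * a ^ (2 - α) := by ring
    _ ≤ _ := by gcongr

theorem max_floor_neg_floor_sub_one_le_abs (s : ℝ) : max (⌊s⌋ : ℝ) (-⌊s⌋ - 1) ≤ |s| :=
  max_le ((Int.floor_le s).trans (le_abs_self s))
    (by linarith [Int.lt_floor_add_one s, neg_abs_le s])

theorem abs_sub_floor_sub_half_le (s : ℝ) : |s - (⌊s⌋ + 1 / 2)| ≤ 1 / 2 :=
  abs_le.2 ⟨by linarith [Int.floor_le s], by linarith [Int.lt_floor_add_one s]⟩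

theorem dist_le_of_abs_sub_le_half {v c : ℝ²} {r : ℝ} (hr : 0 ≤ r)
    (h : ∀ i, |v i - c i| ≤ r / 2) : dist v c ≤ r := by
  rw [EuclideanSpace.dist_eq, sqrt_le_left hr, Fin.sum_univ_two, Real.dist_eq, Real.dist_eq]
  have hsq := fun i => pow_le_pow_left₀ (abs_nonneg _) (h i) 2
  nlinarith [hsq 0, hsq 1]

noncomputable def cellIndex (R : ℝ) (x v : ℝ²) : ℤ × ℤ :=
  (⌊(v 0 - x 0) / R⌋, ⌊(v 1 - x 1) / R⌋)

noncomputable def cellCenter (R : ℝ) (x : ℝ²) (z : ℤ × ℤ) : ℝ² :=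
  x + R • !₂[(z.1 : ℝ) + 1 / 2, (z.2 : ℝ) + 1 / 2]

def ringIndex (z : ℤ × ℤ) : ℕ :=
  (max (max z.1 (-z.1 - 1)) (max z.2 (-z.2 - 1))).toNat

theorem dist_cellCenter_cellIndex_le {R : ℝ} (hR : 0 < R) (x v : ℝ²) :
    dist v (cellCenter R x (cellIndex R x v)) ≤ R := by
  refine dist_le_of_abs_sub_le_half hR.le fun i => ?_
  have key : ∀ t : ℝ, |t - R * (⌊t / R⌋ + 1 / 2)| ≤ R / 2 := fun t => calc
    |t - R * (⌊t / R⌋ + 1 / 2)| = R * |t / R - (⌊t / R⌋ + 1 / 2)| := by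
      rw [← abs_of_pos hR, ← abs_mul, abs_of_pos hR, mul_sub, mul_div_cancel₀ _ hR.ne']
    _ ≤ R * (1 / 2) := by gcongr; exact abs_sub_floor_sub_half_le _
    _ = R / 2 := by ring
  fin_cases i
  · simpa [cellCenter, cellIndex, sub_add_eq_sub_sub] using key (v 0 - x 0)
  · simpa [cellCenter, cellIndex, sub_add_eq_sub_sub] using key (v 1 - x 1)

theorem cast_ringIndex (z : ℤ × ℤ) :
    (ringIndex z : ℝ) = max (max (z.1 : ℝ) (-z.1 - 1)) (max (z.2 : ℝ) (-z.2 - 1)) := by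
  rw [← Int.cast_natCast, ringIndex, Int.toNat_of_nonneg (by omega)]
  push_cast
  rfl

theorem mul_ringIndex_cellIndex_le_dist {R : ℝ} (hR : 0 < R) (x v : ℝ²) :
    R * ringIndex (cellIndex R x v) ≤ dist v x := by
  have key : ∀ i, max (⌊(v i - x i) / R⌋ : ℝ) (-⌊(v i - x i) / R⌋ - 1) ≤ dist v x / R := fun i =>
    calc _ ≤ |(v i - x i) / R| := max_floor_neg_floor_sub_one_le_abs _
      _ = |v i - x i| / R := by rw [abs_div, abs_of_pos hR]
      _ ≤ dist v x / R := by
          gcongr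
          exact (Real.dist_eq _ _).symm.trans_le (PiLp.dist_apply_le v x i)
  rw [mul_comm, ← le_div_iff₀ hR, cast_ringIndex]
  exact max_le (key 0) (key 1)

theorem ringIndex_le_iff {z : ℤ × ℤ} {m : ℕ} :
    ringIndex z ≤ m ↔ z ∈ Icc (-m - 1 : ℤ) m ×ˢ Icc (-m - 1 : ℤ) m := by
  simp only [ringIndex, Int.toNat_le, mem_product, mem_Icc]
  omega

theorem ringIndex_lt_iff {z : ℤ × ℤ} {m : ℕ} :
    ringIndex z < m ↔ z ∈ Icc (-m : ℤ) (m - 1) ×ˢ Icc (-m : ℤ) (m - 1) := by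
  simp only [ringIndex, mem_product, mem_Icc]
  omega

theorem card_filter_ringIndex_eq_le (Z : Finset (ℤ × ℤ)) (m : ℕ) :
    #{z ∈ Z | ringIndex z = m} ≤ 8 * m + 4 := by
  have hsub : Icc (-m : ℤ) (m - 1) ×ˢ Icc (-m : ℤ) (m - 1) ⊆
      Icc (-m - 1 : ℤ) m ×ˢ Icc (-m - 1 : ℤ) m :=
    product_subset_product (Icc_subset_Icc (by omega) (by omega))
      (Icc_subset_Icc (by omega) (by omega))
  calc #{z ∈ Z | ringIndex z = m}
      ≤ #(Icc (-m - 1 : ℤ) m ×ˢ Icc (-m - 1 : ℤ) m \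
          Icc (-m : ℤ) (m - 1) ×ˢ Icc (-m : ℤ) (m - 1)) :=
        card_le_card fun z hz => by
          rw [mem_sdiff, ← ringIndex_le_iff, ← ringIndex_lt_iff]
          have := (mem_filter.1 hz).2
          omega
    _ = 8 * m + 4 := by
        rw [card_sdiff_of_subset hsub, card_product, card_product, Int.card_Icc, Int.card_Icc,
          show (m + 1 - (-m - 1) : ℤ).toNat = 2 * m + 2 by omega,
          show (m - 1 + 1 - -m : ℤ).toNat = 2 * m by omega]
        exact Nat.sub_eq_of_eq_add (by ring)

theorem sum_max_ringIndex_rpow_neg_le {α a : ℝ} (hα : 2 < α) (ha : 1 ≤ a) (Z : Finset (ℤ × ℤ)) :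
    ∑ z ∈ Z, max (ringIndex z : ℝ) a ^ (-α) ≤ 60 * ((α - 1) / (α - 2)) * a ^ (2 - α) := by
  have hg : ∀ m : ℕ, 0 ≤ max (m : ℝ) a ^ (-α) := fun m => rpow_nonneg (by positivity) _
  calc ∑ z ∈ Z, max (ringIndex z : ℝ) a ^ (-α)
      = ∑ z ∈ Z, 1 * max ((ringIndex z : ℕ) : ℝ) a ^ (-α) := by simp only [one_mul]
    _ ≤ ∑ m ∈ Z.image ringIndex, (8 * (m : ℝ) + 4) * max (m : ℝ) a ^ (-α) :=
        sum_mul_comp_le_sum_image (fun m _ => hg m) fun m _ => by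
          simpa using (Nat.cast_le (α := ℝ)).2 (card_filter_ringIndex_eq_le Z m)
    _ = 4 * ∑ m ∈ Z.image ringIndex, (2 * (m : ℝ) + 1) * max (m : ℝ) a ^ (-α) := by
        rw [mul_sum]; exact sum_congr rfl fun m _ => by ring
    _ ≤ 4 * (15 * ((α - 1) / (α - 2)) * a ^ (2 - α)) := by
        gcongr; exact sum_mul_max_rpow_neg_le hα ha _
    _ = 60 * ((α - 1) / (α - 2)) * a ^ (2 - α) := by ring

theorem sum_filter_lt_dist_mul_rpow_neg_le {α φ R B : ℝ} (hα : 2 < α) (hφ : 0 < φ) (hφ1 : φ ≤ 1)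
    (hR : 0 < R) {V : Finset ℝ²} {p : ℝ² → ℝ} (hp : ∀ v ∈ V, 0 ≤ p v)
    (hball : ∀ c : ℝ², ∑ v ∈ V with dist v c ≤ R, p v ≤ B) (x : ℝ²) :
    ∑ v ∈ V with R / φ < dist v x, p v * dist v x ^ (-α) ≤
      60 * B * ((α - 1) / (α - 2)) * φ ^ (α - 2) / R ^ α := by
  set S := V.filter fun v => R / φ < dist v x
  set g : ℤ × ℤ → ℝ := fun z => R ^ (-α) * max (ringIndex z : ℝ) φ⁻¹ ^ (-α)
  have hB : 0 ≤ B := (sum_nonneg fun v hv => hp v (mem_filter.1 hv).1).trans (hball x)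
  have hpoint : ∀ v ∈ S, dist v x ^ (-α) ≤ g (cellIndex R x v) := fun v hv => by
    have hfar : R * φ⁻¹ < dist v x := by rw [← div_eq_mul_inv]; exact (mem_filter.1 hv).2
    simp only [g]
    rw [← mul_rpow hR.le (by positivity)]
    refine rpow_le_rpow_of_nonpos (by positivity) ?_ (by linarith)
    rw [mul_max_of_nonneg _ _ hR.le]
    exact max_le (mul_ringIndex_cellIndex_le_dist hR x v) hfar.le
  have hcell : ∀ z, ∑ v ∈ S with cellIndex R x v = z, p v ≤ B := fun z =>
    (sum_le_sum_of_subset_of_nonneg (fun v hv => by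
        obtain ⟨hvS, rfl⟩ := mem_filter.1 hv
        exact mem_filter.2 ⟨(mem_filter.1 hvS).1, dist_cellCenter_cellIndex_le hR x v⟩)
      fun v hv _ => hp v (mem_filter.1 hv).1).trans (hball (cellCenter R x z))
  calc ∑ v ∈ S, p v * dist v x ^ (-α) ≤ ∑ v ∈ S, p v * g (cellIndex R x v) :=
        sum_le_sum fun v hv => mul_le_mul_of_nonneg_left (hpoint v hv) (hp v (mem_filter.1 hv).1)
    _ ≤ ∑ z ∈ S.image (cellIndex R x), B * g z :=
        sum_mul_comp_le_sum_image (fun z _ => by positivity) fun z _ => hcell z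
    _ = B * R ^ (-α) * ∑ z ∈ S.image (cellIndex R x), max (ringIndex z : ℝ) φ⁻¹ ^ (-α) := by
        rw [mul_sum]; exact sum_congr rfl fun z _ => by simp only [g]; ring
    _ ≤ B * R ^ (-α) * (60 * ((α - 1) / (α - 2)) * φ⁻¹ ^ (2 - α)) := by
        gcongr
        exact sum_max_ringIndex_rpow_neg_le hα (one_le_inv₀ hφ |>.2 hφ1) _
    _ = 60 * B * ((α - 1) / (α - 2)) * φ ^ (α - 2) / R ^ α := by
        rw [rpow_neg hR.le, inv_rpow hφ.le, ← rpow_neg hφ.le, neg_sub]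
        ring

/-- There is a universal constant `C > 0` such that whenever the
total transmission probability in every broadcast region (ball of radius `R_B`)
is at most `1/2`, the expected interference at any point `x` coming from
transmitters at distance more than `R_T = R_B/φ` is at most
`C·((α-1)/(α-2))·φ^(α-2)/R_B^α`. -/
theorem stmt_4 :
    ∃ C : ℝ, 0 < C ∧
      ∀ (α φ R_B : ℝ), 2 < α → 0 < φ → φ ≤ 1 → 0 < R_B →
      ∀ (V : Finset (EuclideanSpace ℝ (Fin 2))) (p : EuclideanSpace ℝ (Fin 2) → ℝ),
        (∀ v ∈ V, 0 ≤ p v ∧ p v ≤ 1) →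
        (∀ c : EuclideanSpace ℝ (Fin 2),
          ∑ v ∈ V.filter (fun v => dist v c ≤ R_B), p v ≤ 1 / 2) →
        ∀ x : EuclideanSpace ℝ (Fin 2),
          ∑ v ∈ V.filter (fun v => R_B / φ < dist v x), p v * dist v x ^ (-α) ≤
            C * ((α - 1) / (α - 2)) * φ ^ (α - 2) / R_B ^ α := by
  refine ⟨30, by norm_num, fun α φ R_B hα hφ hφ1 hR V p hp hball x => ?_⟩
  convert sum_filter_lt_dist_mul_rpow_neg_le hα hφ hφ1 hR (fun v hv => (hp v hv).1) hball x
    using 1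
  ring
end

section
/- Let n ≥ 1, and let i < j be natural numbers. Let Δ be a natural number with Δ ≤ n²/(4·16^j) and let p ∈ [0,1] satisfy p ≤ 16^{i+1}/n². If X is a binomially distributed random variable with parameters Δ and p (the number of successes among Δ independent Bernoulli(p) trials), then ℙ(X ≥ 1) ≤ (2/e)^{j-i+1}. -/
/-!
`ℙ(X ≥ 1) = 1 - (1 - p)^Δ ≤ Δ p` by Bernoulli's inequality (this is Markov's inequality for
`𝔼X = Δp`), and the constraints on `Δ` and `p` give `Δ p ≤ 4 / 16^(j-i)`. Since `e < 4` we have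
`2/e ≥ 1/2`, which leaves plenty of room for `4 / 16^k ≤ (2/e)^(k+1)` when `k ≥ 1`.
-/

open Real NNReal ENNReal

lemma one_sub_one_sub_pow_le_mul {R : Type*} [Ring R] [LinearOrder R] [IsStrictOrderedRing R]
    {p : R} (hp : p ≤ 2) (n : ℕ) : 1 - (1 - p) ^ n ≤ n * p := by
  have := one_add_mul_le_pow (neg_le_neg hp) n
  rw [mul_neg, ← sub_eq_add_neg, ← sub_eq_add_neg] at this
  exact sub_le_comm.mp this

lemma PMF.binomial_toMeasure_setOf_one_le_le (p : ℝ≥0) (h : p ≤ 1) (n : ℕ) :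
    (PMF.binomial p h n).toMeasure {k | 1 ≤ (k : ℕ)} ≤ n * p := by
  have hcompl : {k : Fin (n + 1) | 1 ≤ (k : ℕ)} = {0}ᶜ := by
    ext k
    simp only [Set.mem_ofPred_eq, Set.mem_compl_iff, Set.mem_singleton_iff, Fin.ext_iff,
      Fin.val_zero]
    omega
  rw [hcompl, MeasureTheory.prob_compl_eq_one_sub (measurableSet_singleton _),
    PMF.toMeasure_apply_singleton _ _ (measurableSet_singleton _), PMF.binomial_apply_zero, tsub_le_iff_right]
  have hp : (p : ℝ) ≤ 2 := by linarith [NNReal.coe_le_one.mpr h]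
  have key : (1 : ℝ) ≤ n * p + (1 - (p : ℝ)) ^ n := by
    linarith [one_sub_one_sub_pow_le_mul hp n]
  rw [← NNReal.coe_one, ← NNReal.coe_sub h] at key
  exact_mod_cast key

lemma four_div_sixteen_pow_le (k : ℕ) (hk : 1 ≤ k) :
    4 / (16 : ℝ) ^ k ≤ (2 / exp 1) ^ (k + 1) := by
  obtain ⟨m, rfl⟩ := Nat.exists_eq_add_of_le' hk
  have he : 1 / 2 ≤ 2 / exp 1 := by
    rw [div_le_div_iff₀ two_pos (exp_pos 1)]
    linarith [exp_one_lt_d9]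
  calc 4 / (16 : ℝ) ^ (m + 1) = (1 / 2) ^ 2 * (1 / 16) ^ m := by
        rw [pow_succ, one_div_pow (16 : ℝ)]; field_simp; norm_num
    _ ≤ (1 / 2) ^ 2 * (1 / 2) ^ m := by gcongr; norm_num
    _ = (1 / 2) ^ (m + 1 + 1) := by ring
    _ ≤ (2 / exp 1) ^ (m + 1 + 1) := by gcongr

lemma mul_le_four_div_sixteen_pow {n i j Δ : ℕ} {p : ℝ} (hij : i ≤ j)
    (hΔ : (Δ : ℝ) ≤ (n : ℝ) ^ 2 / (4 * 16 ^ j)) (hp0 : 0 ≤ p)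
    (hp : p ≤ 16 ^ (i + 1) / (n : ℝ) ^ 2) :
    Δ * p ≤ 4 / (16 : ℝ) ^ (j - i) := by
  obtain ⟨k, rfl⟩ := Nat.exists_eq_add_of_le hij
  calc (Δ : ℝ) * p ≤ (n : ℝ) ^ 2 / (4 * 16 ^ (i + k)) * (16 ^ (i + 1) / (n : ℝ) ^ 2) := by
        gcongr
    _ = ((n : ℝ) ^ 2 / (n : ℝ) ^ 2) * (4 / 16 ^ k) := by
        field_simp
        ring
    _ ≤ 4 / 16 ^ (i + k - i) := by
        rw [Nat.add_sub_cancel_left]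
        exact mul_le_of_le_one_left (by positivity) (div_self_le_one _)

theorem stmt_10_general (n i j Δ : ℕ) (hij : i < j)
    (hΔ : (Δ : ℝ) ≤ (n : ℝ) ^ 2 / (4 * 16 ^ j))
    (p : ℝ) (hp0 : 0 ≤ p) (hp1 : p ≤ 1)
    (hp : p ≤ 16 ^ (i + 1) / (n : ℝ) ^ 2) :
    (PMF.binomial (Real.toNNReal p) (Real.toNNReal_le_one.mpr hp1) Δ).toMeasure
        {k | 1 ≤ (k : ℕ)}
      ≤ ENNReal.ofReal ((2 / Real.exp 1) ^ (j - i + 1)) :=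
  calc _ ≤ Δ * (p.toNNReal : ℝ≥0∞) := PMF.binomial_toMeasure_setOf_one_le_le _ _ _
    _ = ENNReal.ofReal (Δ * p) := by
      rw [ENNReal.ofReal_mul (Nat.cast_nonneg _), ofReal_natCast]; rfl
    _ ≤ ENNReal.ofReal ((2 / Real.exp 1) ^ (j - i + 1)) :=
      ENNReal.ofReal_le_ofReal <| (mul_le_four_div_sixteen_pow hij.le hΔ hp0 hp).trans
        (four_div_sixteen_pow_le _ (Nat.sub_pos_of_lt hij))

/-- Let `n ≥ 1`, `i < j`, `Δ ≤ n²/(4·16^j)` and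
`p ≤ 16^(i+1)/n²`. If `X ~ Binomial(Δ, p)`, then
`ℙ(X ≥ 1) ≤ (2/e)^(j-i+1)`. -/
theorem stmt_10 (n i j Δ : ℕ) (hn : 1 ≤ n) (hij : i < j)
    (hΔ : (Δ : ℝ) ≤ (n : ℝ) ^ 2 / (4 * 16 ^ j))
    (p : ℝ) (hp0 : 0 ≤ p) (hp1 : p ≤ 1)
    (hp : p ≤ 16 ^ (i + 1) / (n : ℝ) ^ 2) :
    (PMF.binomial (Real.toNNReal p) (Real.toNNReal_le_one.mpr hp1) Δ).toMeasure
        {k | 1 ≤ (k : ℕ)}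
      ≤ ENNReal.ofReal ((2 / Real.exp 1) ^ (j - i + 1)) :=
  stmt_10_general n i j Δ hij hΔ p hp0 hp1 hp
end

section
/- Let m and r be natural numbers and let w_0, w_1, …, w_r be nonnegative reals with ∑_{i=0}^{r} w_i = 1. Then there exists a natural number j with 0 ≤ j ≤ m such that ∑_{i=0}^{r} (2/e)^{|i-j|+1} · w_i ≤ C/(m+1), where C = (2/e)·(e+2)/(e-2). -/
open Real

/-! The kernel `j ↦ q ^ |i - j|` has total mass `∑_{k ∈ ℤ} q ^ |k| = (1 + q) / (1 - q)` for every
centre `i`, so summing the weighted sums over the `m + 1` candidates `j ≤ m` gives at most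
`q (1 + q) / (1 - q)`, which is `C` for `q = 2 / e`. Some candidate is at most the average. -/

theorem hasSum_pow_natAbs {q : ℝ} (hq : |q| < 1) :
    HasSum (fun k : ℤ => q ^ k.natAbs) ((1 + q) / (1 - q)) := by
  have hnonneg : HasSum (fun n : ℕ => q ^ ((n : ℤ).natAbs)) (1 - q)⁻¹ := by
    simpa using hasSum_geometric_of_abs_lt_one hq
  have hneg : HasSum (fun n : ℕ => q ^ (-((n : ℤ) + 1)).natAbs) (q * (1 - q)⁻¹) := by
    have hfun : (fun n : ℕ => q ^ (-((n : ℤ) + 1)).natAbs) = fun n : ℕ => q * q ^ n := by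
      funext n
      rw [← pow_succ']
      congr 1
    rw [hfun]
    exact (hasSum_geometric_of_abs_lt_one hq).mul_left q
  have h := HasSum.of_nat_of_neg_add_one (f := fun k : ℤ => q ^ k.natAbs) hnonneg hneg
  rwa [← one_add_mul, ← div_eq_mul_inv] at h

theorem sum_pow_natAbs_sub_le {q : ℝ} (hq0 : 0 ≤ q) (hq1 : q < 1) (s : Finset ℕ) (i : ℕ) :
    ∑ j ∈ s, q ^ ((i : ℤ) - j).natAbs ≤ (1 + q) / (1 - q) := by
  have hinj : Set.InjOn (fun j : ℕ => (i : ℤ) - j) s := fun a _ b _ h => by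
    simpa using h
  rw [← Finset.sum_image (f := fun k : ℤ => q ^ k.natAbs) hinj]
  exact sum_le_hasSum _ (fun k _ => pow_nonneg hq0 _)
    (hasSum_pow_natAbs (abs_lt.2 ⟨by linarith, hq1⟩))

theorem Finset.exists_sum_mul_le_div_card {ι κ : Type*} {s : Finset ι} {t : Finset κ}
    (ht : t.Nonempty) {K : ι → κ → ℝ} {w : ι → ℝ} {B : ℝ} (hw : ∀ i ∈ s, 0 ≤ w i)
    (hK : ∀ i ∈ s, ∑ j ∈ t, K i j ≤ B) :
    ∃ j ∈ t, ∑ i ∈ s, K i j * w i ≤ B * (∑ i ∈ s, w i) / t.card := by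
  have hcard : (t.card : ℝ) ≠ 0 := by simpa using ht.ne_empty
  apply Finset.exists_le_of_sum_le ht
  calc ∑ j ∈ t, ∑ i ∈ s, K i j * w i
      = ∑ i ∈ s, (∑ j ∈ t, K i j) * w i := by
        rw [Finset.sum_comm]
        simp only [Finset.sum_mul]
    _ ≤ ∑ i ∈ s, B * w i :=
        Finset.sum_le_sum fun i hi => mul_le_mul_of_nonneg_right (hK i hi) (hw i hi)
    _ = ∑ _j ∈ t, B * (∑ i ∈ s, w i) / t.card := by
        rw [Finset.sum_const, nsmul_eq_mul, ← Finset.mul_sum]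
        field_simp

theorem two_div_exp_one_lt_one : 2 / exp 1 < 1 := by
  rw [div_lt_one (exp_pos 1)]
  linarith [exp_one_gt_d9]

/-- Given nonnegative weights `w 0, …, w r` summing to `1`, there
is an index `j ≤ m` with `∑_{i=0}^{r} (2/e)^(|i-j|+1) · w i ≤ C/(m+1)`,
where `C = (2/e)·(e+2)/(e-2)`. -/
theorem stmt_13 (m r : ℕ) (w : ℕ → ℝ)
    (hw0 : ∀ i ≤ r, 0 ≤ w i)
    (hw1 : ∑ i ∈ Finset.range (r + 1), w i = 1) :
    ∃ j ≤ m,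
      ∑ i ∈ Finset.range (r + 1),
          (2 / Real.exp 1) ^ (((i : ℤ) - (j : ℤ)).natAbs + 1) * w i ≤
        (2 / Real.exp 1) * (Real.exp 1 + 2) / (Real.exp 1 - 2) / ((m : ℝ) + 1) := by
  set q := 2 / exp 1
  have hq0 : 0 ≤ q := by positivity
  have hkernel : ∀ i ∈ Finset.range (r + 1),
      ∑ j ∈ Finset.range (m + 1), q ^ (((i : ℤ) - j).natAbs + 1) ≤ q * ((1 + q) / (1 - q)) := by
    intro i _
    simp only [pow_succ', ← Finset.mul_sum]
    exact mul_le_mul_of_nonneg_left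
      (sum_pow_natAbs_sub_le hq0 two_div_exp_one_lt_one _ i) hq0
  obtain ⟨j, hj, hle⟩ := Finset.exists_sum_mul_le_div_card Finset.nonempty_range_add_one
    (fun i hi => hw0 i (Nat.lt_succ_iff.1 (Finset.mem_range.1 hi))) hkernel
  have hC : q * ((1 + q) / (1 - q)) = 2 / exp 1 * (exp 1 + 2) / (exp 1 - 2) := by
    have : exp 1 - 2 ≠ 0 := by linarith [exp_one_gt_d9]
    simp only [q]
    field_simp
  refine ⟨j, Nat.lt_succ_iff.1 (Finset.mem_range.1 hj), ?_⟩
  simpa [hw1, hC] using hle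
end
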